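/- arXiv:2106.07948 — 3 statements merged into one kernel-verified Lean document; each statement's English description precedes it below -/
import Mathlib

section
/- Let r be a positive integer and let F be an r×r complex Hermitian matrix such that ‖F − I‖_max ≤ 1/(3r²), where I is the r×r identity matrix. Then there exists an r×r complex Hermitian matrix G such that G·F·G = I and ‖G − I‖_max ≤ ‖F − I‖_max. -/
/-!
Take `G := F^{-1/2}` through the functional calculus, so that `G` is Hermitian and `G F G = 1`.
By Gershgorin, every eigenvalue `λ` of `F` satisfies `|λ - 1| ≤ r ε` with `ε := ‖F - 1‖_max`,
and `λ^{-1/2} = 1 - (λ - 1)/2 + O((λ - 1)²)`. Hence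
`G - 1 = -(F - 1)/2 + R` where `R` is the functional calculus of the second-order remainder;
conjugating a diagonal matrix by a unitary does not increase the max norm beyond the largest
diagonal entry, so `‖R‖_max ≤ (3/2)(r ε)² ≤ ε/2`, the last step being `3 r² ε ≤ 1`.
-/

/-- The max matrix norm `‖F‖_max = max_{j,k} |F_{jk}|` of a complex `r × r` matrix. -/
noncomputable def maxNorm {r : ℕ} (F : Matrix (Fin r) (Fin r) ℂ) : ℝ :=
  ⨆ j : Fin r, ⨆ k : Fin r, ‖F j k‖

open Matrix

section MaxNorm

variable {r : ℕ}

lemma norm_apply_le_maxNorm (F : Matrix (Fin r) (Fin r) ℂ) (j k : Fin r) :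
    ‖F j k‖ ≤ maxNorm F :=
  (le_ciSup (Finite.bddAbove_range fun k => ‖F j k‖) k).trans
    (le_ciSup (Finite.bddAbove_range fun j => ⨆ k, ‖F j k‖) j)

lemma maxNorm_nonneg (F : Matrix (Fin r) (Fin r) ℂ) : 0 ≤ maxNorm F :=
  Real.iSup_nonneg fun _ => Real.iSup_nonneg fun _ => norm_nonneg _

lemma maxNorm_le {F : Matrix (Fin r) (Fin r) ℂ} {c : ℝ} (h : ∀ j k, ‖F j k‖ ≤ c) (hc : 0 ≤ c) :
    maxNorm F ≤ c :=
  Real.iSup_le (fun j => Real.iSup_le (h j) hc) hc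

lemma norm_le_mul_maxNorm_of_mem_spectrum {M : Matrix (Fin r) (Fin r) ℂ} {μ : ℂ}
    (hμ : μ ∈ spectrum ℂ M) : ‖μ‖ ≤ r * maxNorm M := by
  obtain ⟨k, hk⟩ := eigenvalue_mem_ball
    (Module.End.hasEigenvalue_iff_mem_spectrum.2 ((spectrum_toLin' M).symm ▸ hμ))
  calc ‖μ‖ ≤ ‖M k k‖ + ‖μ - M k k‖ := norm_le_insert' μ (M k k)
    _ ≤ ‖M k k‖ + ∑ j ∈ Finset.univ.erase k, ‖M k j‖ := by
      gcongr; exact mem_closedBall_iff_norm.1 hk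
    _ = ∑ j, ‖M k j‖ := Finset.add_sum_erase _ (fun j => ‖M k j‖) (Finset.mem_univ k)
    _ ≤ ∑ _j : Fin r, maxNorm M := Finset.sum_le_sum fun j _ => norm_apply_le_maxNorm M k j
    _ = r * maxNorm M := by simp

lemma abs_sub_one_le_mul_maxNorm_of_mem_spectrum {F : Matrix (Fin r) (Fin r) ℂ} {x : ℝ}
    (hx : x ∈ spectrum ℝ F) : |x - 1| ≤ r * maxNorm (F - 1) := by
  have hx' : x - 1 ∈ spectrum ℝ (F - 1) := by
    rw [← map_one (algebraMap ℝ _), ← spectrum.sub_singleton_eq]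
    exact Set.sub_mem_sub hx rfl
  have := norm_le_mul_maxNorm_of_mem_spectrum (spectrum.algebraMap_mem ℂ hx')
  rwa [Complex.coe_algebraMap, Complex.norm_real, Real.norm_eq_abs] at this

end MaxNorm

namespace Matrix

variable {𝕜 n : Type*} [RCLike 𝕜] [Fintype n] [DecidableEq n]

lemma sum_norm_sq_eq_one_of_mem_unitaryGroup {U : Matrix n n 𝕜} (hU : U ∈ unitaryGroup n 𝕜)
    (j : n) : ∑ i, ‖U j i‖ ^ 2 = 1 := by
  have := congrFun (congrFun (mem_unitaryGroup_iff.1 hU) j) j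
  simp only [mul_apply, star_apply, one_apply_eq, RCLike.star_def, RCLike.mul_conj] at this
  exact_mod_cast this

lemma norm_mul_diagonal_mul_star_apply_le {U : Matrix n n 𝕜} (hU : U ∈ unitaryGroup n 𝕜)
    {d : n → 𝕜} {c : ℝ} (hd : ∀ i, ‖d i‖ ≤ c) (j k : n) :
    ‖(U * diagonal d * star U) j k‖ ≤ c := by
  have hc : 0 ≤ c := (norm_nonneg _).trans (hd j)
  calc ‖(U * diagonal d * star U) j k‖ = ‖∑ i, d i * (U j i * star (U k i))‖ := by
        rw [mul_apply]
        simp only [mul_diagonal, star_apply]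
        congr 1; exact Finset.sum_congr rfl fun i _ => by ring
    _ ≤ ∑ i, c * ((‖U j i‖ ^ 2 + ‖U k i‖ ^ 2) / 2) := by
        refine (norm_sum_le _ _).trans (Finset.sum_le_sum fun i _ => ?_)
        rw [norm_mul, norm_mul, norm_star]
        gcongr
        · exact hd i
        · nlinarith [sq_nonneg (‖U j i‖ - ‖U k i‖)]
    _ = c := by
        rw [← Finset.mul_sum, ← Finset.sum_div, Finset.sum_add_distrib,
          sum_norm_sq_eq_one_of_mem_unitaryGroup hU, sum_norm_sq_eq_one_of_mem_unitaryGroup hU]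
        ring

lemma continuousOn_real_spectrum (A : Matrix n n 𝕜) (f : ℝ → ℝ) :
    ContinuousOn f (spectrum ℝ A) :=
  A.finite_real_spectrum.continuousOn f

namespace IsHermitian

variable {A : Matrix n n 𝕜}

lemma norm_cfc_apply_le (hA : A.IsHermitian) {f : ℝ → ℝ} {c : ℝ}
    (hf : ∀ x ∈ spectrum ℝ A, |f x| ≤ c) (j k : n) : ‖(cfc f A) j k‖ ≤ c := by
  rw [hA.cfc_eq, IsHermitian.cfc, Unitary.conjStarAlgAut_apply]
  refine norm_mul_diagonal_mul_star_apply_le hA.eigenvectorUnitary.2 (fun i => ?_) j k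
  simpa using hf _ (hA.eigenvalues_mem_spectrum_real i)

lemma cfc_inv_sqrt_mul_self_mul_cfc_inv_sqrt (hA : A.IsHermitian)
    (hpos : ∀ x ∈ spectrum ℝ A, 0 < x) :
    cfc (fun x => (√x)⁻¹) A * A * cfc (fun x => (√x)⁻¹) A = 1 := by
  have hcont := A.continuousOn_real_spectrum
  calc _ = cfc (fun x => (√x)⁻¹ * x * (√x)⁻¹) A := by
        rw [cfc_mul (fun x => (√x)⁻¹ * x) _ A (hcont _) (hcont _),
          cfc_mul (fun x => (√x)⁻¹) (fun x => x) A (hcont _) (hcont _), cfc_id' ℝ A]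
    _ = 1 := (cfc_congr fun x hx => ?_).trans (cfc_const_one ℝ A)
  have := hpos x hx
  field_simp
  exact (Real.sq_sqrt this.le).symm

lemma cfc_inv_sqrt_sub_one (hA : A.IsHermitian) :
    cfc (fun x => (√x)⁻¹) A - 1 =
      cfc (fun x => (√x)⁻¹ - 1 + 2⁻¹ * (x - 1)) A - (2⁻¹ : ℝ) • (A - 1) := by
  have hcont := A.continuousOn_real_spectrum
  rw [cfc_add A (fun x => (√x)⁻¹ - 1) (fun x => 2⁻¹ * (x - 1)) (hcont _) (hcont _),
    cfc_sub (fun x => (√x)⁻¹) (fun _ => 1) A (hcont _) (hcont _),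
    cfc_const_mul 2⁻¹ (fun x => x - 1) A (hcont _),
    cfc_sub (fun x => x) (fun _ => 1) A (hcont _) (hcont _), cfc_const_one ℝ A, cfc_id' ℝ A]
  abel

end IsHermitian

end Matrix

lemma abs_inv_sqrt_sub_one_add_half_le {t δ : ℝ} (ht : |t - 1| ≤ δ) (hδ : δ ≤ 1 / 3) :
    |(√t)⁻¹ - 1 + 2⁻¹ * (t - 1)| ≤ 3 / 2 * δ ^ 2 := by
  obtain ⟨ht₁, ht₂⟩ := abs_le.1 ht
  have ht₀ : 0 < t := by linarith
  set s := √t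
  have hs₀ : 0 < s := Real.sqrt_pos.2 ht₀
  have hs₂ : s ^ 2 = t := Real.sq_sqrt ht₀.le
  rw [← hs₂] at ht₁ ⊢
  have hsq : (s ^ 2 - 1) ^ 2 ≤ δ ^ 2 := sq_le_sq' (by linarith) (by linarith)
  have hcubic : s + 2 ≤ 3 * s * (s + 1) ^ 2 := by
    nlinarith [mul_nonneg hs₀.le (show 0 ≤ 3 * s ^ 2 - 2 by linarith)]
  have hremainder : s⁻¹ - 1 + 2⁻¹ * (s ^ 2 - 1) = (s - 1) ^ 2 * (s + 2) / (2 * s) := by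
    field_simp; ring
  rw [hremainder, abs_of_nonneg (by positivity), div_le_iff₀ (by positivity)]
  calc (s - 1) ^ 2 * (s + 2) ≤ (s - 1) ^ 2 * (3 * s * (s + 1) ^ 2) := by gcongr
    _ = 3 / 2 * (s ^ 2 - 1) ^ 2 * (2 * s) := by ring
    _ ≤ 3 / 2 * δ ^ 2 * (2 * s) := by gcongr

theorem stmt_0_general {r : ℕ} (F : Matrix (Fin r) (Fin r) ℂ)
    (hF : F.IsHermitian) (hsmall : maxNorm (F - 1) ≤ 1 / (3 * (r : ℝ) ^ 2)) :
    ∃ G : Matrix (Fin r) (Fin r) ℂ, G.IsHermitian ∧ G * F * G = 1 ∧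
      maxNorm (G - 1) ≤ maxNorm (F - 1) := by
  set ε := maxNorm (F - 1)
  have hε : 0 ≤ ε := maxNorm_nonneg _
  have hrε : 3 * (r : ℝ) ^ 2 * ε ≤ 1 :=
    calc 3 * (r : ℝ) ^ 2 * ε ≤ 3 * r ^ 2 * (1 / (3 * r ^ 2)) := by gcongr
      _ ≤ 1 := by rw [mul_one_div]; exact div_self_le_one _
  have hδ : r * ε ≤ 1 / 3 := by
    have : (r : ℝ) ≤ r ^ 2 := by exact_mod_cast Nat.le_self_pow two_ne_zero r
    nlinarith
  have hspec (x : ℝ) (hx : x ∈ spectrum ℝ F) : |x - 1| ≤ r * ε :=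
    abs_sub_one_le_mul_maxNorm_of_mem_spectrum hx
  refine ⟨cfc (fun x => (√x)⁻¹) F, isHermitian_iff_isSelfAdjoint.2 (cfc_predicate _ _),
    hF.cfc_inv_sqrt_mul_self_mul_cfc_inv_sqrt fun x hx => ?_, maxNorm_le (fun j k => ?_) hε⟩
  · linarith [(abs_le.1 (hspec x hx)).1]
  calc ‖(cfc (fun x => (√x)⁻¹) F - 1) j k‖
      ≤ ‖cfc (fun x => (√x)⁻¹ - 1 + 2⁻¹ * (x - 1)) F j k‖ + 2⁻¹ * ‖(F - 1) j k‖ := by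
        rw [hF.cfc_inv_sqrt_sub_one, Matrix.sub_apply, Matrix.smul_apply]
        exact (norm_sub_le _ _).trans_eq (by simp)
    _ ≤ 3 / 2 * (r * ε) ^ 2 + 2⁻¹ * ε := by
        gcongr
        · exact hF.norm_cfc_apply_le
            (fun x hx => abs_inv_sqrt_sub_one_add_half_le (hspec x hx) hδ) j k
        · exact norm_apply_le_maxNorm _ _ _
    _ ≤ ε := by nlinarith

/-- If `F` is an `r × r` Hermitian complex matrix with `‖F - I‖_max ≤ 1/(3r²)`, then there
exists a Hermitian matrix `G` with `G * F * G = I` and `‖G - I‖_max ≤ ‖F - I‖_max`. -/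
theorem stmt_0 {r : ℕ} (hr : 0 < r) (F : Matrix (Fin r) (Fin r) ℂ)
    (hF : F.IsHermitian) (hsmall : maxNorm (F - 1) ≤ 1 / (3 * (r : ℝ) ^ 2)) :
    ∃ G : Matrix (Fin r) (Fin r) ℂ, G.IsHermitian ∧ G * F * G = 1 ∧
      maxNorm (G - 1) ≤ maxNorm (F - 1) :=
  stmt_0_general F hF hsmall
end

section
/- Let H be a complex Hilbert space and let T be a bounded self-adjoint operator on H whose eigenvectors span a dense subspace of H (that is, the topological closure of the algebraic span of all eigenspaces of T is all of H). Let ε > 0, let μ₁ ≤ μ₂ ≤ … ≤ μ_r be real numbers, and let u₁, …, u_r be an orthonormal family in H such that ‖T u_k − μ_k u_k‖ ≤ ε for each k = 1, …, r. Then the dimension (as a cardinal, possibly infinite) of the span of all eigenspaces of T corresponding to eigenvalues lying in the closed interval [μ₁ − √r·ε, μ_r + √r·ε] is at least r. -/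
/-!
Let `K` be the span of the eigenspaces of `T` for eigenvalues in the window
`[μ₁ - √r ε, μ_r + √r ε]` and suppose `dim K < r`. As the eigenvectors are total, `Kᗮ` lies in
the closed span of the eigenvectors with eigenvalues outside the window, on which
`‖(T - μ) x‖ ≥ √r ε ‖x‖` for every `μ ∈ [μ₁, μ_r]`; on `Kᗮ` this is even strict for `x ≠ 0`,
because equality would force `((T - μ)² - r ε²) x = 0`, making `x` a combination of eigenvectors
for `μ ± √r ε`, which are in `K`. The projection onto `Kᗮ` commutes with `T`, so the
projections `w_k` of the `u_k` satisfy `‖(T - μ_k) w_k‖ ≤ ε`, whence `‖w_k‖² < 1 / r`. But as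
`dim K < r`, some `v = ∑ g_k u_k ≠ 0` projects to `0` in `K`; then `v = ∑ g_k w_k` and
Cauchy–Schwarz gives `‖v‖² ≤ ‖v‖² ∑ ‖w_k‖² < ‖v‖²`.
-/

open Module End Submodule RCLike
open scoped ComplexConjugate

theorem Module.End.iSup_mem_invtSubmodule {R M : Type*} [Semiring R] [AddCommMonoid M]
    [Module R M] {f : End R M} {ι : Sort*} {p : ι → Submodule R M}
    (hp : ∀ i, p i ∈ f.invtSubmodule) : (⨆ i, p i) ∈ f.invtSubmodule :=
  (mem_invtSubmodule f).mpr <| iSup_le fun i =>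
    ((mem_invtSubmodule f).mp (hp i)).trans (comap_mono (le_iSup p i))

section Eigenspaces

variable {R M : Type*} [CommRing R] [AddCommGroup M] [Module R M]

theorem Module.End.biSup_eigenspace_mem_invtSubmodule (f : End R M) {ι : Type*} (g : ι → R)
    (s : Set ι) : (⨆ i ∈ s, eigenspace f (g i)) ∈ f.invtSubmodule :=
  iSup_mem_invtSubmodule fun _ => iSup_mem_invtSubmodule fun _ => eigenspace_mem_invtSubmodule f _

theorem Module.End.eq_zero_of_mul_sub_smul_apply_eq_zero {f : End R M} {P : Submodule R M}
    (hP : P ∈ f.invtSubmodule) {a b : R} (ha : Disjoint P (eigenspace f a))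
    (hb : Disjoint P (eigenspace f b)) {x : M} (hx : x ∈ P)
    (hab : ((f - a • 1) * (f - b • 1)) x = 0) : x = 0 := by
  have hy : f x - b • x ∈ P := P.sub_mem (hP hx) (P.smul_mem b hx)
  have hy0 : f x - b • x = 0 := disjoint_def.mp ha _ hy <| mem_eigenspace_iff.mpr <| by
    simpa [sub_eq_zero] using hab
  exact disjoint_def.mp hb x hx (mem_eigenspace_iff.mpr (sub_eq_zero.mp hy0))

end Eigenspaces

section InnerProductSpace

variable {𝕜 E : Type*} [RCLike 𝕜] [NormedAddCommGroup E] [InnerProductSpace 𝕜 E]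

local notation "⟪" x ", " y "⟫" => inner 𝕜 x y

theorem Submodule.orthogonal_le_topologicalClosure_of_le_orthogonal [CompleteSpace E]
    {K L : Submodule 𝕜 E} (hL : L ≤ Kᗮ) (hKL : (K ⊔ L).topologicalClosure = ⊤) :
    Kᗮ ≤ L.topologicalClosure := by
  have hinf : L.topologicalClosureᗮ ⊓ Kᗮ = ⊥ := by
    rw [orthogonal_closure, inf_orthogonal, sup_comm, ← topologicalClosure_eq_top_iff, hKL]
  have h := sup_orthogonal_inf_of_hasOrthogonalProjection
    (L.topologicalClosure_minimal hL (isClosed_orthogonal K))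
  rw [hinf, sup_bot_eq] at h
  exact h.ge

theorem Orthonormal.norm_sum_smul_sq {ι : Type*} [Fintype ι] {v : ι → E} (hv : Orthonormal 𝕜 v)
    (g : ι → 𝕜) : ‖∑ i, g i • v i‖ ^ 2 = ∑ i, ‖g i‖ ^ 2 := by
  simpa using hv.orthogonalFamily.norm_sum g Finset.univ

theorem Orthonormal.one_le_sum_norm_starProjection_orthogonal_sq {ι : Type*} [Fintype ι]
    {u : ι → E} (hu : Orthonormal 𝕜 u) {K : Submodule 𝕜 E} [FiniteDimensional 𝕜 K]
    (hK : finrank 𝕜 K < Fintype.card ι) : 1 ≤ ∑ i, ‖Kᗮ.starProjection (u i)‖ ^ 2 := by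
  have hdep : ¬ LinearIndependent 𝕜 (fun i => K.orthogonalProjectionOnto (u i)) :=
    fun h => hK.not_ge h.fintype_card_le_finrank
  obtain ⟨g, hg, i₀, hi₀⟩ := Fintype.not_linearIndependent_iff.mp hdep
  set v := ∑ i, g i • u i
  have hv : ∑ i, g i • Kᗮ.starProjection (u i) = v := by
    have hPv : K.orthogonalProjectionOnto v = 0 := by simpa [v] using hg
    calc ∑ i, g i • Kᗮ.starProjection (u i) = Kᗮ.starProjection v := by simp [v]
      _ = v := by
        rw [starProjection_orthogonal_val, starProjection_apply, hPv, ZeroMemClass.coe_zero,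
          sub_zero]
  have hvpos : 0 < ‖v‖ ^ 2 := by
    rw [hu.norm_sum_smul_sq]
    exact (pow_pos (norm_pos_iff.mpr hi₀) 2).trans_le
      (Finset.single_le_sum (fun i _ => sq_nonneg ‖g i‖) (Finset.mem_univ i₀))
  have hle : ‖v‖ ^ 2 ≤ ‖v‖ ^ 2 * ∑ i, ‖Kᗮ.starProjection (u i)‖ ^ 2 :=
    calc ‖v‖ ^ 2 ≤ (∑ i, ‖g i‖ * ‖Kᗮ.starProjection (u i)‖) ^ 2 := by
          rw [← hv]
          gcongr
          exact norm_sum_le_of_le _ fun i _ => (norm_smul _ _).le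
      _ ≤ (∑ i, ‖g i‖ ^ 2) * ∑ i, ‖Kᗮ.starProjection (u i)‖ ^ 2 :=
          Finset.sum_mul_sq_le_sq_mul_sq _ _ _
      _ = ‖v‖ ^ 2 * ∑ i, ‖Kᗮ.starProjection (u i)‖ ^ 2 := by rw [hu.norm_sum_smul_sq]
  exact le_of_mul_le_mul_left (by simpa using hle) hvpos

namespace LinearMap.IsSymmetric

variable {T : E →ₗ[𝕜] E} (hT : T.IsSymmetric)
include hT

theorem starProjection_map_apply_of_mem_invtSubmodule {K : Submodule 𝕜 E}
    [K.HasOrthogonalProjection] (hK : K ∈ invtSubmodule T) (x : E) :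
    K.starProjection (T x) = T (K.starProjection x) :=
  eq_starProjection_of_mem_orthogonal' (hK (K.starProjection_apply_mem x))
    (hT.orthogonalComplement_mem_invtSubmodule hK (K.sub_starProjection_mem_orthogonal x))
    (by rw [← map_add, add_sub_cancel])

-- `x` minimises the form on `F`, so its first variation `2 t re ⟪T x, w⟫` along `w ∈ F` vanishes
-- (the quadratic in `t` has nonpositive discriminant).
theorem inner_map_eq_zero_of_re_inner_map_self_eq_zero {F : Submodule 𝕜 E}
    (hF : ∀ y ∈ F, 0 ≤ re ⟪T y, y⟫) {x z : E} (hx : x ∈ F) (hx0 : re ⟪T x, x⟫ = 0)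
    (hz : z ∈ F) : ⟪T x, z⟫ = 0 := by
  set w := conj ⟪T x, z⟫ • z
  have hw : re ⟪T x, w⟫ = ‖⟪T x, z⟫‖ ^ 2 := by
    rw [inner_smul_right, RCLike.conj_mul, ← ofReal_pow, ofReal_re]
  have hquad (t : ℝ) : 0 ≤ re ⟪T w, w⟫ * (t * t) + 2 * re ⟪T x, w⟫ * t + 0 := by
    have h := hF (x + (t : 𝕜) • w) (F.add_mem hx (F.smul_mem _ (F.smul_mem _ hz)))
    have hsymm : re ⟪T w, x⟫ = re ⟪T x, w⟫ := by rw [hT, ← inner_conj_symm, conj_re]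
    simp only [map_add, map_smul, inner_add_left, inner_add_right, inner_smul_left,
      inner_smul_right, conj_ofReal, map_add, re_ofReal_mul, hx0, hsymm] at h
    linarith
  have hdisc := discrim_le_zero hquad
  rw [discrim, hw] at hdisc
  have : ‖⟪T x, z⟫‖ ^ 2 = 0 := by nlinarith [sq_nonneg (‖⟪T x, z⟫‖ ^ 2)]
  simpa using this

theorem map_map_eq_smul_of_norm_sq_le {F : Submodule 𝕜 E} (hF : F ∈ invtSubmodule T) {a : ℝ}
    (hbound : ∀ y ∈ F, a * ‖y‖ ^ 2 ≤ ‖T y‖ ^ 2) {x : E} (hx : x ∈ F)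
    (hxa : ‖T x‖ ^ 2 ≤ a * ‖x‖ ^ 2) : T (T x) = (a : 𝕜) • x := by
  set A : E →ₗ[𝕜] E := T * T - (a : 𝕜) • 1
  have hA : A.IsSymmetric :=
    (hT.mul_of_commute hT rfl).sub (LinearMap.IsSymmetric.id.smul (conj_ofReal a))
  have hAre (y : E) : re ⟪A y, y⟫ = ‖T y‖ ^ 2 - a * ‖y‖ ^ 2 := by
    simp [A, inner_sub_left, inner_smul_left, hT (T y)]
  have hApos (y : E) (hy : y ∈ F) : 0 ≤ re ⟪A y, y⟫ := by
    rw [hAre]; linarith [hbound y hy]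
  have hAx : re ⟪A x, x⟫ = 0 := by
    rw [hAre]; linarith [hbound x hx]
  have hAxF : A x ∈ F := F.sub_mem (hF (hF hx)) (F.smul_mem _ hx)
  have hA0 : A x = 0 := inner_self_eq_zero.mp
    (hA.inner_map_eq_zero_of_re_inner_map_self_eq_zero hApos hx hAx hAxF)
  simpa [A, sub_eq_zero] using hA0

theorem le_norm_sub_smul_sq_of_mem_biSup_eigenspace {W : Set 𝕜} {m : 𝕜} {a : ℝ}
    (hW : ∀ t ∈ W, HasEigenvalue T t → a ≤ ‖t - m‖ ^ 2) {y : E}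
    (hy : y ∈ ⨆ t ∈ W, eigenspace T t) : a * ‖y‖ ^ 2 ≤ ‖T y - m • y‖ ^ 2 := by
  rw [iSup_subtype'] at hy
  obtain ⟨s, hs⟩ := mem_iSup_iff_exists_finset.mp hy
  obtain ⟨f, rfl⟩ := (mem_iSup_finset_iff_exists_sum _ _).mp hs
  have hO := hT.orthogonalFamily_eigenspaces.comp (Subtype.val_injective (p := (· ∈ W)))
  have hS : T (∑ i ∈ s, (f i : E)) - m • ∑ i ∈ s, (f i : E)
      = ∑ i ∈ s, ((i : 𝕜) - m) • (f i : E) := by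
    simp only [map_sum, Finset.smul_sum, ← Finset.sum_sub_distrib, sub_smul,
      mem_eigenspace_iff.mp (f _).2]
  have hnorm := hO.norm_sum (fun i => ((i : 𝕜) - m) • f i) s
  have hnorm' := hO.norm_sum f s
  simp only [coe_subtypeₗᵢ, coe_subtype, SetLike.val_smul, norm_smul, mul_pow,
    coe_norm] at hnorm hnorm'
  rw [hS, hnorm, hnorm', Finset.mul_sum]
  refine Finset.sum_le_sum fun i _ => ?_
  by_cases hfi : (f i : E) = 0
  · simp [hfi]
  · exact mul_le_mul_of_nonneg_right
      (hW i i.2 (hasEigenvalue_of_hasEigenvector ⟨(f i).2, hfi⟩)) (sq_nonneg _)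

theorem orthogonal_biSup_eigenspace_le_closure [CompleteSpace E]
    (hdense : (⨆ t, eigenspace T t).topologicalClosure = ⊤) (W : Set 𝕜) :
    (⨆ t ∈ W, eigenspace T t)ᗮ ≤ (⨆ t ∈ Wᶜ, eigenspace T t).topologicalClosure := by
  refine orthogonal_le_topologicalClosure_of_le_orthogonal ?_ ?_
  · refine iSup₂_le fun t ht => isOrtho_iff_le.mp ?_
    refine isOrtho_iSup_right.mpr fun r => isOrtho_iSup_right.mpr fun hr => ?_
    exact hT.orthogonalFamily_eigenspaces.isOrtho fun h => ht (h ▸ hr)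
  · refine top_unique (hdense.ge.trans (topologicalClosure_mono (iSup_le fun t => ?_)))
    by_cases ht : t ∈ W
    · exact le_sup_of_le_left (le_iSup₂_of_le t ht le_rfl)
    · exact le_sup_of_le_right (le_iSup₂_of_le t ht le_rfl)

theorem sq_le_norm_sub_sq_of_hasEigenvalue {s : Set ℝ} {m c : ℝ} (hc : 0 ≤ c)
    (hs : Set.Icc (m - c) (m + c) ⊆ s) {t : 𝕜} (ht : t ∉ (↑) '' s)
    (hev : HasEigenvalue T t) : c ^ 2 ≤ ‖t - m‖ ^ 2 := by
  obtain ⟨r, rfl⟩ : ∃ r : ℝ, (r : 𝕜) = t :=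
    ⟨re t, conj_eq_iff_re.mp (hT.conj_eigenvalue_eq_self hev)⟩
  have hr : r ∉ Set.Icc (m - c) (m + c) := fun hr => ht ⟨r, hs hr, rfl⟩
  rw [← ofReal_sub, norm_ofReal, sq_abs]
  rw [Set.mem_Icc, not_and_or, not_le, not_le] at hr
  rcases hr with hr | hr <;> nlinarith

end LinearMap.IsSymmetric

theorem ContinuousLinearMap.le_norm_sub_smul_sq_of_mem_closure_biSup_eigenspace
    {T : E →L[𝕜] E} (hT : (T : E →ₗ[𝕜] E).IsSymmetric) {W : Set 𝕜} {m : 𝕜} {a : ℝ}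
    (hW : ∀ t ∈ W, HasEigenvalue (T : E →ₗ[𝕜] E) t → a ≤ ‖t - m‖ ^ 2) {y : E}
    (hy : y ∈ (⨆ t ∈ W, eigenspace (T : E →ₗ[𝕜] E) t).topologicalClosure) :
    a * ‖y‖ ^ 2 ≤ ‖T y - m • y‖ ^ 2 := by
  rw [← SetLike.mem_coe, topologicalClosure_coe] at hy
  refine closure_minimal (fun z hz => ?_) (isClosed_le (f := fun z => a * ‖z‖ ^ 2)
    (g := fun z => ‖T z - m • z‖ ^ 2) (by fun_prop) (by fun_prop)) hy
  exact hT.le_norm_sub_smul_sq_of_mem_biSup_eigenspace hW hz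

namespace IsSelfAdjoint

variable [CompleteSpace E] {T : E →L[𝕜] E} (hT : IsSelfAdjoint T)
  (hdense : (⨆ t, eigenspace (T : E →ₗ[𝕜] E) t).topologicalClosure = ⊤)
include hT hdense

theorem mul_norm_lt_norm_sub_smul_of_mem_orthogonal
    {s : Set ℝ} {m c : ℝ} (hc : 0 ≤ c) (hs : Set.Icc (m - c) (m + c) ⊆ s) {x : E}
    (hx : x ∈ (⨆ t ∈ s, eigenspace (T : E →ₗ[𝕜] E) (t : 𝕜))ᗮ) (hx0 : x ≠ 0) :
    c * ‖x‖ < ‖T x - (m : 𝕜) • x‖ := by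
  set K := ⨆ t ∈ s, eigenspace (T : E →ₗ[𝕜] E) (t : 𝕜)
  set F := (⨆ t ∈ ((↑) '' s)ᶜ, eigenspace (T : E →ₗ[𝕜] E) t).topologicalClosure
  have hTs := hT.isSymmetric
  have hxF : x ∈ F := hTs.orthogonal_biSup_eigenspace_le_closure hdense _ (by rwa [iSup_image])
  have hbound (y : E) (hy : y ∈ F) : c ^ 2 * ‖y‖ ^ 2 ≤ ‖T y - (m : 𝕜) • y‖ ^ 2 :=
    T.le_norm_sub_smul_sq_of_mem_closure_biSup_eigenspace hTs
      (fun t ht => hTs.sq_le_norm_sub_sq_of_hasEigenvalue hc hs ht) hy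
  -- If the bound were attained at `x`, then `x` would minimise `‖(T - m) y‖² - c²‖y‖²` on `F`,
  -- so `((T - m)² - c²) x = 0` and `x` would combine eigenvectors for `m ± c`, which lie in `K`.
  by_contra! hle
  set S : E →ₗ[𝕜] E := (T : E →ₗ[𝕜] E) - (m : 𝕜) • 1
  have hS : S.IsSymmetric := hTs.sub (LinearMap.IsSymmetric.id.smul (conj_ofReal m))
  have hS_invt {P : Submodule 𝕜 E} (hP : P ∈ invtSubmodule (T : E →ₗ[𝕜] E)) :
      P ∈ invtSubmodule S := fun y hy => P.sub_mem (hP hy) (P.smul_mem _ hy)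
  have hSSx : S (S x) = ((c ^ 2 : ℝ) : 𝕜) • x :=
    hS.map_map_eq_smul_of_norm_sq_le
      (hS_invt (topologicalClosure_mem_invtSubmodule (biSup_eigenspace_mem_invtSubmodule _ id _)))
      hbound hxF (by rw [← mul_pow]; exact pow_le_pow_left₀ (norm_nonneg _) hle 2)
  have hdisj {t : ℝ} (ht : t ∈ s) : Disjoint Kᗮ (eigenspace (T : E →ₗ[𝕜] E) (t : 𝕜)) :=
    K.orthogonal_disjoint.symm.mono_right (le_iSup₂_of_le t ht le_rfl)
  refine hx0 (eq_zero_of_mul_sub_smul_apply_eq_zero (a := ((m - c : ℝ) : 𝕜))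
    (b := ((m + c : ℝ) : 𝕜)) (hTs.orthogonalComplement_mem_invtSubmodule
      (biSup_eigenspace_mem_invtSubmodule _ _ s)) (hdisj (hs ⟨le_rfl, by linarith⟩))
    (hdisj (hs ⟨by linarith, le_rfl⟩)) hx ?_)
  have hSSx' : T (T x) - (m : 𝕜) • T x - (m : 𝕜) • (T x - (m : 𝕜) • x)
      = ((c ^ 2 : ℝ) : 𝕜) • x := by
    simpa [S] using hSSx
  simp only [Module.End.mul_apply, LinearMap.sub_apply, LinearMap.smul_apply,
    Module.End.one_apply, map_sub, map_smul, ContinuousLinearMap.coe_coe]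
  push_cast at hSSx' ⊢
  linear_combination (norm := module) hSSx'

theorem mul_norm_starProjection_orthogonal_lt
    {s : Set ℝ} [(⨆ t ∈ s, eigenspace (T : E →ₗ[𝕜] E) (t : 𝕜)).HasOrthogonalProjection]
    {m c : ℝ} (hc : 0 ≤ c) (hs : Set.Icc (m - c) (m + c) ⊆ s) {v : E}
    (hv : (⨆ t ∈ s, eigenspace (T : E →ₗ[𝕜] E) (t : 𝕜))ᗮ.starProjection v ≠ 0) :
    c * ‖(⨆ t ∈ s, eigenspace (T : E →ₗ[𝕜] E) (t : 𝕜))ᗮ.starProjection v‖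
      < ‖T v - (m : 𝕜) • v‖ := by
  set P := (⨆ t ∈ s, eigenspace (T : E →ₗ[𝕜] E) (t : 𝕜))ᗮ.starProjection
  have hcomm : P (T v) = T (P v) :=
    hT.isSymmetric.starProjection_map_apply_of_mem_invtSubmodule
      (hT.isSymmetric.orthogonalComplement_mem_invtSubmodule
        (biSup_eigenspace_mem_invtSubmodule _ _ _)) v
  calc c * ‖P v‖ < ‖T (P v) - (m : 𝕜) • P v‖ :=
        mul_norm_lt_norm_sub_smul_of_mem_orthogonal hT hdense hc hs
          (starProjection_apply_mem _ v) hv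
    _ = ‖P (T v - (m : 𝕜) • v)‖ := by rw [map_sub, map_smul, hcomm]
    _ ≤ ‖T v - (m : 𝕜) • v‖ := norm_starProjection_apply_le _ _

theorem norm_starProjection_orthogonal_sq_lt
    {s : Set ℝ} [(⨆ t ∈ s, eigenspace (T : E →ₗ[𝕜] E) (t : 𝕜)).HasOrthogonalProjection]
    {n m ε : ℝ} (hn : 0 < n) (hs : Set.Icc (m - √n * ε) (m + √n * ε) ⊆ s) {v : E}
    (hv : ‖T v - (m : 𝕜) • v‖ ≤ ε) :
    ‖(⨆ t ∈ s, eigenspace (T : E →ₗ[𝕜] E) (t : 𝕜))ᗮ.starProjection v‖ ^ 2 < 1 / n := by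
  set w := (⨆ t ∈ s, eigenspace (T : E →ₗ[𝕜] E) (t : 𝕜))ᗮ.starProjection v
  by_cases hw : w = 0
  · simpa [hw] using hn
  have hε : 0 ≤ ε := (norm_nonneg _).trans hv
  have hgap : √n * ε * ‖w‖ < ε :=
    (mul_norm_starProjection_orthogonal_lt hT hdense (by positivity) hs hw).trans_le hv
  have hlt : √n * ‖w‖ < 1 := by nlinarith
  calc ‖w‖ ^ 2 = (√n * ‖w‖) ^ 2 / n := by rw [mul_pow, Real.sq_sqrt hn.le]; field_simp
    _ < 1 / n := by gcongr; exact pow_lt_one₀ (by positivity) hlt two_ne_zero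

end IsSelfAdjoint

end InnerProductSpace

theorem stmt_2_general {H : Type*} [NormedAddCommGroup H] [InnerProductSpace ℂ H] [CompleteSpace H]
    (T : H →L[ℂ] H) (hT : IsSelfAdjoint T)
    (hdense : (⨆ μ : ℂ, Module.End.eigenspace (T : H →ₗ[ℂ] H) μ).topologicalClosure = ⊤)
    {r : ℕ} (hr : 0 < r) (ε : ℝ)
    (μ : Fin r → ℝ) (hμ : Monotone μ)
    (u : Fin r → H) (hu : Orthonormal ℂ u)
    (happrox : ∀ k : Fin r, ‖T (u k) - (μ k : ℂ) • u k‖ ≤ ε) :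
    (r : Cardinal) ≤ Module.rank ℂ
      ↥(⨆ t ∈ Set.Icc (μ ⟨0, hr⟩ - Real.sqrt r * ε)
            (μ ⟨r - 1, Nat.sub_lt hr one_pos⟩ + Real.sqrt r * ε),
          Module.End.eigenspace (T : H →ₗ[ℂ] H) (t : ℂ)) := by
  set K := ⨆ t ∈ Set.Icc (μ ⟨0, hr⟩ - Real.sqrt r * ε)
    (μ ⟨r - 1, Nat.sub_lt hr one_pos⟩ + Real.sqrt r * ε), eigenspace (T : H →ₗ[ℂ] H) (t : ℂ)
  by_contra! hK
  have : FiniteDimensional ℂ K :=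
    Module.rank_lt_aleph0_iff.mp (hK.trans (Cardinal.natCast_lt_aleph0))
  have hfin : finrank ℂ K < Fintype.card (Fin r) := by
    rw [Fintype.card_fin]
    exact_mod_cast (finrank_eq_rank ℂ K).symm ▸ hK
  have hr' : (0 : ℝ) < r := Nat.cast_pos.mpr hr
  have hsmall (k : Fin r) : ‖Kᗮ.starProjection (u k)‖ ^ 2 < 1 / r :=
    hT.norm_starProjection_orthogonal_sq_lt hdense hr' (Set.Icc_subset_Icc
      (by gcongr; exact hμ (Nat.zero_le _)) (by gcongr; exact hμ (Nat.le_sub_one_of_lt k.2)))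
      (happrox k)
  have hsum : ∑ k, ‖Kᗮ.starProjection (u k)‖ ^ 2 < 1 :=
    calc ∑ k, ‖Kᗮ.starProjection (u k)‖ ^ 2 < ∑ _k : Fin r, 1 / (r : ℝ) :=
          Finset.sum_lt_sum_of_nonempty ⟨⟨0, hr⟩, Finset.mem_univ _⟩ fun k _ => hsmall k
      _ = 1 := by simp [hr'.ne']
  exact (hu.one_le_sum_norm_starProjection_orthogonal_sq hfin).not_gt hsum

/-- Let `T` be a bounded self-adjoint operator on a complex Hilbert space `H` whose
eigenvectors span a dense subspace of `H`. If `μ₁ ≤ … ≤ μ_r` are real numbers and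
`u₁, …, u_r` is an orthonormal family with `‖T u_k - μ_k u_k‖ ≤ ε` for each `k`, then the
span of the eigenspaces of `T` corresponding to eigenvalues in
`[μ₁ - √r ε, μ_r + √r ε]` has dimension at least `r`. -/
theorem stmt_2 {H : Type*} [NormedAddCommGroup H] [InnerProductSpace ℂ H] [CompleteSpace H]
    (T : H →L[ℂ] H) (hT : IsSelfAdjoint T)
    (hdense : (⨆ μ : ℂ, Module.End.eigenspace (T : H →ₗ[ℂ] H) μ).topologicalClosure = ⊤)
    {r : ℕ} (hr : 0 < r) (ε : ℝ) (hε : 0 < ε)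
    (μ : Fin r → ℝ) (hμ : Monotone μ)
    (u : Fin r → H) (hu : Orthonormal ℂ u)
    (happrox : ∀ k : Fin r, ‖T (u k) - (μ k : ℂ) • u k‖ ≤ ε) :
    (r : Cardinal) ≤ Module.rank ℂ
      ↥(⨆ t ∈ Set.Icc (μ ⟨0, hr⟩ - Real.sqrt r * ε)
            (μ ⟨r - 1, Nat.sub_lt hr one_pos⟩ + Real.sqrt r * ε),
          Module.End.eigenspace (T : H →ₗ[ℂ] H) (t : ℂ)) :=
  stmt_2_general T hT hdense hr ε μ hμ u hu happrox
end

section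
/- Let U be an open subset of ℝ^d × ℝ^d and let v : U → ℂ^m be a continuously differentiable column-vector-valued function satisfying v(x,ξ)* v(x,ξ) = 1 at every point of U. Define P := v v* (a matrix-valued function on U). Then at every point of U one has the scalar identity v* {P, v} = v* {P, P} v. -/
/-!
Differentiating `P = v v*` along a direction gives `P' = v' v* + v v'*`, and differentiating
`v* v = 1` gives `v'* v = -v* v'`. With these, for each `α` the `α`-th terms of `v* {P, v}` and of
`v* {P, P} v` both reduce to `A* B - B* A + (v* A)(v* B) - (v* B)(v* A)`, where `A = v_{x^α}` and
`B = v_{ξ_α}`.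
-/

/-- The partial derivative `B_{x^α}` of a matrix-valued function on `ℝ^d × ℝ^d`,
taken entrywise in the direction of the `α`-th coordinate of the first (`x`) factor. -/
noncomputable def pX {d a b : ℕ} (α : Fin d)
    (B : (Fin d → ℝ) × (Fin d → ℝ) → Matrix (Fin a) (Fin b) ℂ)
    (z : (Fin d → ℝ) × (Fin d → ℝ)) : Matrix (Fin a) (Fin b) ℂ :=
  Matrix.of fun i j => fderiv ℝ (fun w => B w i j) z (Pi.single α 1, 0)

/-- The partial derivative `B_{ξ_α}` of a matrix-valued function on `ℝ^d × ℝ^d`,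
taken entrywise in the direction of the `α`-th coordinate of the second (`ξ`) factor. -/
noncomputable def pXi {d a b : ℕ} (α : Fin d)
    (B : (Fin d → ℝ) × (Fin d → ℝ) → Matrix (Fin a) (Fin b) ℂ)
    (z : (Fin d → ℝ) × (Fin d → ℝ)) : Matrix (Fin a) (Fin b) ℂ :=
  Matrix.of fun i j => fderiv ℝ (fun w => B w i j) z (0, Pi.single α 1)

/-- The Poisson bracket `{B, C} = ∑_α (B_{x^α} C_{ξ_α} - B_{ξ_α} C_{x^α})` of two
matrix-valued functions on `ℝ^d × ℝ^d`. -/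
noncomputable def poisson {d a b c : ℕ}
    (B : (Fin d → ℝ) × (Fin d → ℝ) → Matrix (Fin a) (Fin b) ℂ)
    (C : (Fin d → ℝ) × (Fin d → ℝ) → Matrix (Fin b) (Fin c) ℂ)
    (z : (Fin d → ℝ) × (Fin d → ℝ)) : Matrix (Fin a) (Fin c) ℂ :=
  ∑ α : Fin d, (pX α B z * pXi α C z - pXi α B z * pX α C z)

/-- The generalised Poisson bracket
`{B, C, D} = ∑_α (B_{x^α} C D_{ξ_α} - B_{ξ_α} C D_{x^α})` of three matrix-valued
functions on `ℝ^d × ℝ^d`. -/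
noncomputable def poisson3 {d a b c e : ℕ}
    (B : (Fin d → ℝ) × (Fin d → ℝ) → Matrix (Fin a) (Fin b) ℂ)
    (C : (Fin d → ℝ) × (Fin d → ℝ) → Matrix (Fin b) (Fin c) ℂ)
    (D : (Fin d → ℝ) × (Fin d → ℝ) → Matrix (Fin c) (Fin e) ℂ)
    (z : (Fin d → ℝ) × (Fin d → ℝ)) : Matrix (Fin a) (Fin e) ℂ :=
  ∑ α : Fin d, (pX α B z * C z * pXi α D z - pXi α B z * C z * pX α D z)

open Matrix

section EntryDeriv

variable {E : Type*} [NormedAddCommGroup E] [NormedSpace ℝ E] {l n p : Type*}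

noncomputable def entryDeriv (e : E) (B : E → Matrix l n ℂ) (z : E) : Matrix l n ℂ :=
  Matrix.of fun i j => fderiv ℝ (fun w => B w i j) z e

theorem entryDeriv_mul [Fintype n] (e : E) {B : E → Matrix l n ℂ} {C : E → Matrix n p ℂ}
    {z : E} (hB : ∀ i j, DifferentiableAt ℝ (fun w => B w i j) z)
    (hC : ∀ i j, DifferentiableAt ℝ (fun w => C w i j) z) :
    entryDeriv e (fun w => B w * C w) z = entryDeriv e B z * C z + B z * entryDeriv e C z := by
  ext i j
  have h : HasFDerivAt (fun w => ∑ k, B w i k * C w k j)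
      (∑ k, (B z i k • fderiv ℝ (fun w => C w k j) z
        + C z k j • fderiv ℝ (fun w => B w i k) z)) z :=
    HasFDerivAt.fun_sum fun k _ => (hB i k).hasFDerivAt.fun_mul (hC k j).hasFDerivAt
  simp only [entryDeriv, Matrix.of_apply, Matrix.add_apply, Matrix.mul_apply, h.fderiv,
    FunLike.coe_sum, Finset.sum_apply, _root_.add_apply, FunLike.coe_smul, Pi.smul_apply,
    smul_eq_mul, ← Finset.sum_add_distrib]
  exact Finset.sum_congr rfl fun k _ => by ring

theorem entryDeriv_conjTranspose (e : E) {B : E → Matrix l n ℂ} {z : E}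
    (hB : ∀ i j, DifferentiableAt ℝ (fun w => B w i j) z) :
    entryDeriv e (fun w => (B w)ᴴ) z = (entryDeriv e B z)ᴴ := by
  ext i j
  have h : HasFDerivAt (fun w => starRingEnd ℂ (B w j i))
      (((starL' ℝ : ℂ ≃L[ℝ] ℂ) : ℂ →L[ℝ] ℂ) ∘L fderiv ℝ (fun w => B w j i) z) z :=
    (hB j i).hasFDerivAt.star
  simp [entryDeriv, h.fderiv, conjTranspose_apply]

theorem entryDeriv_of_eventuallyEq_const (e : E) {B : E → Matrix l n ℂ} {z : E}
    {M : Matrix l n ℂ} (hB : B =ᶠ[nhds z] fun _ => M) : entryDeriv e B z = 0 := by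
  ext i j
  have hij : (fun w => B w i j) =ᶠ[nhds z] fun _ => M i j := hB.mono fun w hw => by simp only [hw]
  simp [entryDeriv, hij.fderiv_eq]

theorem entryDeriv_mul_conjTranspose_self [Fintype p] (e : E) {v : E → Matrix n p ℂ} {z : E}
    (hv : ∀ i j, DifferentiableAt ℝ (fun w => v w i j) z) :
    entryDeriv e (fun w => v w * (v w)ᴴ) z
      = entryDeriv e v z * (v z)ᴴ + v z * (entryDeriv e v z)ᴴ := by
  have hvH : ∀ i j, DifferentiableAt ℝ (fun w => (v w)ᴴ i j) z := fun i j => (hv j i).star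
  rw [entryDeriv_mul e hv hvH, entryDeriv_conjTranspose e hv]

variable [Fintype n]

theorem conjTranspose_entryDeriv_mul_self [DecidableEq p] (e : E) {v : E → Matrix n p ℂ}
    {z : E} (hv : ∀ i j, DifferentiableAt ℝ (fun w => v w i j) z)
    (hunit : ∀ᶠ w in nhds z, (v w)ᴴ * v w = 1) :
    (entryDeriv e v z)ᴴ * v z = -((v z)ᴴ * entryDeriv e v z) := by
  have hvH : ∀ i j, DifferentiableAt ℝ (fun w => (v w)ᴴ i j) z := fun i j => (hv j i).star
  have h0 := entryDeriv_of_eventuallyEq_const e hunit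
  rw [entryDeriv_mul e hvH hv, entryDeriv_conjTranspose e hv] at h0
  exact eq_neg_of_add_eq_zero_left h0

end EntryDeriv

theorem pX_eq_entryDeriv {d a b : ℕ} (α : Fin d)
    (B : (Fin d → ℝ) × (Fin d → ℝ) → Matrix (Fin a) (Fin b) ℂ) (z : (Fin d → ℝ) × (Fin d → ℝ)) :
    pX α B z = entryDeriv (Pi.single α 1, 0) B z := rfl

theorem pXi_eq_entryDeriv {d a b : ℕ} (α : Fin d)
    (B : (Fin d → ℝ) × (Fin d → ℝ) → Matrix (Fin a) (Fin b) ℂ) (z : (Fin d → ℝ) × (Fin d → ℝ)) :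
    pXi α B z = entryDeriv (0, Pi.single α 1) B z := rfl

/-- `A`, `B` play the derivatives of `v` along two directions, so that `A v* + v A*` and
`B v* + v B*` are the corresponding derivatives of `P = v v*`. -/
theorem conjTranspose_mul_bracket_eq {R m k : Type*} [Ring R] [StarRing R] [Fintype m]
    [Fintype k] [DecidableEq k] {v A B : Matrix m k R}
    (h1 : vᴴ * v = 1) (hA : Aᴴ * v = -(vᴴ * A)) (hB : Bᴴ * v = -(vᴴ * B)) :
    vᴴ * ((A * vᴴ + v * Aᴴ) * B - (B * vᴴ + v * Bᴴ) * A)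
      = vᴴ * ((A * vᴴ + v * Aᴴ) * (B * vᴴ + v * Bᴴ)
          - (B * vᴴ + v * Bᴴ) * (A * vᴴ + v * Aᴴ)) * v := by
  have h1' : ∀ X : Matrix k k R, vᴴ * (v * X) = X := fun X => by
    rw [← Matrix.mul_assoc, h1, Matrix.one_mul]
  have hA' : ∀ X : Matrix k k R, Aᴴ * (v * X) = -(vᴴ * (A * X)) :=
    fun X => by rw [← Matrix.mul_assoc, hA, Matrix.neg_mul, Matrix.mul_assoc]
  have hB' : ∀ X : Matrix k k R, Bᴴ * (v * X) = -(vᴴ * (B * X)) :=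
    fun X => by rw [← Matrix.mul_assoc, hB, Matrix.neg_mul, Matrix.mul_assoc]
  simp only [Matrix.mul_add, Matrix.add_mul, Matrix.sub_mul, Matrix.mul_sub, Matrix.mul_assoc,
    h1', hA', hB', h1, hA, hB, Matrix.mul_one, Matrix.mul_neg, neg_neg]
  abel

open Matrix in
/-- If `v : U → ℂ^m` is a continuously differentiable column of unit length
(`v* v = 1` on `U`) and `P := v v*`, then `v* {P, v} = v* {P, P} v` on `U`. -/
theorem stmt_5 {d m : ℕ} (U : Set ((Fin d → ℝ) × (Fin d → ℝ))) (hU : IsOpen U)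
    (v : (Fin d → ℝ) × (Fin d → ℝ) → Matrix (Fin m) (Fin 1) ℂ)
    (hv : ∀ i j, ContDiffOn ℝ 1 (fun w => v w i j) U)
    (hunit : ∀ z ∈ U, (v z)ᴴ * v z = 1) :
    ∀ z ∈ U,
      (v z)ᴴ * poisson (fun w => v w * (v w)ᴴ) v z
        = (v z)ᴴ * poisson (fun w => v w * (v w)ᴴ) (fun w => v w * (v w)ᴴ) z * v z := by
  intro z hz
  have hd : ∀ i j, DifferentiableAt ℝ (fun w => v w i j) z := fun i j =>
    ((hv i j).contDiffAt (hU.mem_nhds hz)).differentiableAt one_ne_zero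
  have hunit_nhds : ∀ᶠ w in nhds z, (v w)ᴴ * v w = 1 :=
    Filter.eventually_of_mem (hU.mem_nhds hz) hunit
  simp only [poisson, Matrix.mul_sum, Matrix.sum_mul, pX_eq_entryDeriv, pXi_eq_entryDeriv,
    entryDeriv_mul_conjTranspose_self _ hd]
  exact Finset.sum_congr rfl fun α _ => conjTranspose_mul_bracket_eq (hunit z hz)
    (conjTranspose_entryDeriv_mul_self _ hd hunit_nhds)
    (conjTranspose_entryDeriv_mul_self _ hd hunit_nhds)
end
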